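/- arXiv:1010.5952 — 2 statements merged into one kernel-verified Lean document; each statement's English description precedes it below -/
import Mathlib

section
/- Let R be a unique factorization domain with field of fractions K. Then R is a D-ring if and only if: for all f(x), g(x) in R[x] with g(x) nonconstant and primitive such that for every k ∈ R with g(k) ≠ 0 one has g(k) divides f(k) in R, it follows that g(x) divides f(x) in R[x]. -/
/-!
Over a GCD domain write `g = c g'` with `g'` primitive. If `g(k) ∣ f(k)` outside a finite set
`S`, then `g'(k) ∣ (f t)(k)` for every `k` with `g'(k) ≠ 0`, where
`t = ∏_{a ∈ S, g'(a) ≠ 0} (g' - g'(a))`; so the primitive divisibility property gives `g' ∣ f t`.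
Each factor `g' - g'(a)` differs from `g'` by a nonzero constant, so `t` is coprime to `g'` over
the fraction field and `g' ∣ f` there. Conversely, Gauss's lemma turns divisibility over the
fraction field by a primitive polynomial into divisibility over `R`. The primitive divisibility
property forces `R` to be infinite (otherwise `∏_{a ∈ R} (X - a)` vanishes everywhere without
dividing `1`), which settles the case `g = 0`.
-/

open Polynomial

/-- An integral domain `R` is a *D-ring* if for all polynomials `f, g ∈ R[x]` such that
`g(k) ∣ f(k)` in `R` for all but finitely many `k ∈ R`, there is a polynomial `q` over the
field of fractions of `R` with `f = q * g` in `K[x]`. -/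
def IsDRing (R : Type*) [CommRing R] [IsDomain R] : Prop :=
  ∀ f g : Polynomial R,
    (∀ᶠ k in Filter.cofinite, g.eval k ∣ f.eval k) →
    ∃ q : Polynomial (FractionRing R),
      f.map (algebraMap R (FractionRing R)) = q * g.map (algebraMap R (FractionRing R))

namespace Polynomial

section CommRing

variable {R : Type*} [CommRing R]

theorem eval_dvd_eval_mul_prod_sub_C {f g : R[X]} (s : Finset R)
    (hs : ∀ k ∉ s, g.eval k ≠ 0 → g.eval k ∣ f.eval k) (k : R) (hk : g.eval k ≠ 0) :
    g.eval k ∣ (f * ∏ a ∈ s, (g - C (g.eval a))).eval k := by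
  by_cases hks : k ∈ s
  · rw [eval_mul, eval_prod, Finset.prod_eq_zero hks (by simp), mul_zero]
    exact dvd_zero _
  · rw [eval_mul]
    exact (hs k hks hk).mul_right _

theorem exists_monic_forall_eval_eq_zero [Nontrivial R] [Finite R] :
    ∃ p : R[X], p.Monic ∧ 0 < p.natDegree ∧ ∀ k, p.eval k = 0 := by
  have := Fintype.ofFinite R
  refine ⟨∏ a : R, (X - C a), monic_prod_of_monic _ _ fun a _ => monic_X_sub_C a, ?_,
    fun k => by rw [eval_prod]; exact Finset.prod_eq_zero (Finset.mem_univ k) (by simp)⟩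
  rw [natDegree_prod_of_monic _ _ fun a _ => monic_X_sub_C a]
  simpa using Fintype.card_pos

end CommRing

theorem isCoprime_prod_sub_C {K ι : Type*} [Field K] (p : K[X]) (s : Finset ι) (c : ι → K)
    (hc : ∀ i ∈ s, c i ≠ 0) : IsCoprime p (∏ i ∈ s, (p - C (c i))) := by
  refine IsCoprime.prod_right fun i hi => ⟨C (c i)⁻¹, -C (c i)⁻¹, ?_⟩
  rw [neg_mul, ← sub_eq_add_neg, ← mul_sub, sub_sub_cancel, ← C_mul, inv_mul_cancel₀ (hc i hi),
    C_1]

theorem eq_zero_of_eventually_eval_eq_zero {R : Type*} [CommRing R] [IsDomain R] [Infinite R]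
    {p : R[X]} (h : ∀ᶠ k in Filter.cofinite, p.eval k = 0) : p = 0 :=
  eq_zero_of_infinite_isRoot p (Filter.frequently_cofinite_iff_infinite.mp h.frequently)

theorem exists_eq_C_mul_isPrimitive {R : Type*} [CommRing R] [IsDomain R] [IsGCDMonoid R]
    {g : R[X]} (hg : g ≠ 0) : ∃ c g', c ≠ 0 ∧ g'.IsPrimitive ∧ g = C c * g' := by
  have := Classical.arbitrary (NormalizedGCDMonoid R)
  exact ⟨g.content, g.primPart, content_eq_zero_iff.not.mpr hg, g.isPrimitive_primPart,
    g.eq_C_content_mul_primPart⟩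

end Polynomial

def PrimitiveDvdOfEvalDvd (R : Type*) [CommRing R] : Prop :=
  ∀ f g : R[X], 1 ≤ g.degree → g.IsPrimitive →
    (∀ k : R, g.eval k ≠ 0 → g.eval k ∣ f.eval k) → g ∣ f

namespace PrimitiveDvdOfEvalDvd

variable {R : Type*} [CommRing R]

theorem infinite [IsDomain R] (hP : PrimitiveDvdOfEvalDvd R) : Infinite R := by
  by_contra hfin
  rw [not_infinite_iff_finite] at hfin
  obtain ⟨p, hmonic, hpos, hzero⟩ := exists_monic_forall_eval_eq_zero (R := R)
  have hdeg : 1 ≤ p.degree :=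
    Nat.WithBot.one_le_iff_zero_lt.mpr (natDegree_pos_iff_degree_pos.mp hpos)
  have hdvd : p ∣ 1 := hP 1 p hdeg hmonic.isPrimitive fun k hk => absurd (hzero k) hk
  have := natDegree_le_of_dvd hdvd one_ne_zero
  rw [natDegree_one] at this
  omega

theorem map_dvd_map_of_isPrimitive {K : Type*} [Field K] {φ : R →+* K}
    (hφ : Function.Injective φ) (hP : PrimitiveDvdOfEvalDvd R) {f g : R[X]} (hdeg : 1 ≤ g.degree)
    (hg : g.IsPrimitive) (h : ∀ᶠ k in Filter.cofinite, g.eval k ∣ f.eval k) :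
    g.map φ ∣ f.map φ := by
  classical
  set s := (Filter.eventually_cofinite.mp h).toFinset.filter (fun a => g.eval a ≠ 0)
  have hfg := hP (f * ∏ a ∈ s, (g - C (g.eval a))) g hdeg hg <|
    eval_dvd_eval_mul_prod_sub_C s fun k hks hk => by
      by_contra hdvd
      exact hks (Finset.mem_filter.mpr ⟨by simpa using hdvd, hk⟩)
  have hcop : IsCoprime (g.map φ) ((∏ a ∈ s, (g - C (g.eval a))).map φ) := by
    simpa [Polynomial.map_prod] using isCoprime_prod_sub_C (g.map φ) s (fun a => φ (g.eval a))
      fun a ha => (map_ne_zero_iff φ hφ).mpr (Finset.mem_filter.mp ha).2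
  exact hcop.dvd_of_dvd_mul_right (by simpa using Polynomial.map_dvd φ hfg)

theorem map_dvd_map [IsDomain R] [IsGCDMonoid R] [Infinite R] {K : Type*} [Field K] {φ : R →+* K}
    (hφ : Function.Injective φ) (hP : PrimitiveDvdOfEvalDvd R) {f g : R[X]}
    (h : ∀ᶠ k in Filter.cofinite, g.eval k ∣ f.eval k) : g.map φ ∣ f.map φ := by
  rcases eq_or_ne g 0 with rfl | hg
  · rw [eq_zero_of_eventually_eval_eq_zero (p := f) (h.mono fun k hk => by simpa using hk),
      Polynomial.map_zero]
  obtain ⟨c, p, hc, hp, rfl⟩ := exists_eq_C_mul_isPrimitive hg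
  have hcK : IsUnit (C (φ c)) := isUnit_C.mpr ((map_ne_zero_iff φ hφ).mpr hc).isUnit
  rw [Polynomial.map_mul, map_C, hcK.mul_left_dvd]
  rcases le_or_gt 1 p.degree with hdeg | hdeg
  · refine map_dvd_map_of_isPrimitive hφ hP hdeg hp (h.mono fun k hk => ?_)
    rw [eval_mul] at hk
    exact (dvd_mul_left _ _).trans hk
  · refine (isUnit_iff_degree_eq_zero.mpr ?_).dvd
    rw [degree_map_eq_of_injective hφ]
    exact (Nat.WithBot.lt_one_iff_le_zero.mp hdeg).antisymm (zero_le_degree_iff.mpr hp.ne_zero)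

end PrimitiveDvdOfEvalDvd

theorem isDRing_iff_map_dvd_map (R : Type*) [CommRing R] [IsDomain R] :
    IsDRing R ↔ ∀ f g : R[X], (∀ᶠ k in Filter.cofinite, g.eval k ∣ f.eval k) →
      g.map (algebraMap R (FractionRing R)) ∣ f.map (algebraMap R (FractionRing R)) := by
  refine forall₂_congr fun f g => imp_congr_right fun _ => exists_congr fun q => ?_
  rw [mul_comm]

theorem IsDRing.primitiveDvdOfEvalDvd {R : Type*} [CommRing R] [IsDomain R] [IsGCDMonoid R]
    (hD : IsDRing R) : PrimitiveDvdOfEvalDvd R := by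
  intro f g _ hg hfg
  refine hg.dvd_of_fraction_map_dvd_fraction_map ((isDRing_iff_map_dvd_map R).mp hD f g ?_)
  refine Filter.eventually_cofinite.mpr <|
    (finite_setOfPred_isRoot hg.ne_zero).subset fun k hk => ?_
  by_contra hroot
  exact hk (hfg k hroot)

theorem PrimitiveDvdOfEvalDvd.isDRing {R : Type*} [CommRing R] [IsDomain R] [IsGCDMonoid R]
    (hP : PrimitiveDvdOfEvalDvd R) : IsDRing R :=
  have := hP.infinite
  (isDRing_iff_map_dvd_map R).mpr fun _ _ =>
    hP.map_dvd_map (IsFractionRing.injective R (FractionRing R))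

theorem isDRing_iff_primitive_dvd
    (R : Type*) [CommRing R] [IsDomain R] [UniqueFactorizationMonoid R] :
    IsDRing R ↔
      ∀ f g : Polynomial R, 1 ≤ g.degree → g.IsPrimitive →
        (∀ k : R, g.eval k ≠ 0 → g.eval k ∣ f.eval k) → g ∣ f :=
  ⟨IsDRing.primitiveDvdOfEvalDvd, PrimitiveDvdOfEvalDvd.isDRing⟩
end

section
/- Let R be an integral domain. Then R is a D-ring if and only if for every nonconstant polynomial f(x) ∈ R[x] there exists a nonzero prime ideal 𝔭 of R and an element k ∈ R such that f(k) ∈ 𝔭. -/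
open Polynomial

/-!
If `R` is a D-ring and `f` is nonconstant without values in nonzero primes, then every nonzero
value of `f` is a unit, so `f(k) ∣ 1` for almost all `k` and `f` would be a unit in `K[x]`.

Conversely, let `g(k) ∣ f(k)` for almost all `k`, and let `D = A f + B g` be the gcd of `f` and
`g` in `K[x]`. Clearing denominators, `g(k)` divides a multiple of `D(k)` for almost all `k`, so an
integral multiple of `g / D` divides a fixed nonzero `m` at almost all points. Such a `p` is
constant: otherwise take `k₀` with `0 ≠ s = p(k₀) ∣ m` and `t` a multiple of `m` such that
`t x + k₀` avoids the finitely many bad points (possible since `R` is not a field). Then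
`p(t x + k₀) = s H(x)`, and each value `p(t x + k₀)` divides `m ∣ t` and is `≡ s (mod t)`, so it
divides `s`. So every value of the nonconstant `H` is a unit, and none lies in a nonzero prime.
-/

open Filter

theorem infinite_of_not_isField {R : Type*} [CommRing R] [IsDomain R] (hR : ¬IsField R) :
    Infinite R :=
  not_finite_iff_infinite.mp fun _ => hR (Finite.isField_of_domain R)

theorem exists_ne_zero_forall_mul_add_of_eventually {R : Type*} [CommRing R] [IsDomain R]
    (hR : ¬IsField R) {P : R → Prop} (hP : ∀ᶠ k in cofinite, P k) {k₀ : R} (hk₀ : P k₀) :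
    ∃ e : R, e ≠ 0 ∧ ∀ x, P (e * x + k₀) := by
  obtain ⟨a, ha0, hau⟩ := Ring.exists_not_isUnit_of_not_isField hR
  set B := (eventually_cofinite.mp hP).toFinset
  have hB : ∀ {b}, b ∈ B ↔ ¬P b := by simp [B]
  set e := a * ∏ b ∈ B, (k₀ - b)
  have he0 : e ≠ 0 := by
    refine mul_ne_zero ha0 (Finset.prod_ne_zero_iff.mpr fun b hb => sub_ne_zero.mpr ?_)
    rintro rfl
    exact hB.mp hb hk₀
  refine ⟨e, he0, fun x => ?_⟩
  -- if `e * x + k₀` were a bad point, `e * x` would divide `e / a`, making `a` a unit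
  by_contra hx
  obtain ⟨z, hz⟩ : k₀ - (e * x + k₀) ∣ ∏ b ∈ B, (k₀ - b) :=
    Finset.dvd_prod_of_mem _ (hB.mpr hx)
  have he : e * 1 = e * -(a * x * z) := by
    calc e * 1 = a * ∏ b ∈ B, (k₀ - b) := mul_one e
      _ = e * -(a * x * z) := by rw [hz]; ring
  exact hau (.of_mul_eq_one (-(x * z)) (by linear_combination -(mul_left_cancel₀ he0 he)))

namespace Polynomial

section

variable {R : Type*} [CommRing R]

/-- The condition `S(f) ≠ ∅`. -/
def HasNonzeroPrimeValue (f : R[X]) : Prop :=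
  ∃ 𝔭 : Ideal R, 𝔭.IsPrime ∧ 𝔭 ≠ ⊥ ∧ ∃ k : R, f.eval k ∈ 𝔭

theorem hasNonzeroPrimeValue_of_eval {f : R[X]} {k : R} (hk0 : f.eval k ≠ 0)
    (hk : ¬IsUnit (f.eval k)) : f.HasNonzeroPrimeValue := by
  obtain ⟨M, hM, hkM⟩ := exists_max_ideal_of_mem_nonunits hk
  exact ⟨M, hM.isPrime, fun hbot => hk0 (by simpa [hbot] using hkM), k, hkM⟩

theorem HasNonzeroPrimeValue.exists_not_isUnit_eval {f : R[X]} (hf : f.HasNonzeroPrimeValue) :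
    ∃ k, ¬IsUnit (f.eval k) := by
  obtain ⟨𝔭, h𝔭, -, k, hk⟩ := hf
  exact ⟨k, fun hu => h𝔭.ne_top (Ideal.eq_top_of_isUnit_mem _ hk hu)⟩

theorem HasNonzeroPrimeValue.not_isField [Nontrivial R] {f : R[X]}
    (hf : f.HasNonzeroPrimeValue) : ¬IsField R := by
  obtain ⟨𝔭, h𝔭, h𝔭0, -⟩ := hf
  exact Ring.not_isField_of_ne_of_ne h𝔭0 h𝔭.ne_top

theorem C_eval_dvd_comp_C_mul_X_add_C (p : R[X]) {a t : R} (ht : p.eval a ∣ t) :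
    C (p.eval a) ∣ p.comp (C t * X + C a) := by
  have h := sub_dvd_eval_sub (C t * X + C a) (C a) (p.map C)
  rw [eval_map, eval_map, ← comp, ← comp, comp_C, add_sub_cancel_right] at h
  exact dvd_sub_self_right.mp (((_root_.map_dvd C ht).trans (dvd_mul_right _ _)).trans h)

end

section

variable {R : Type*} [CommRing R] [IsDomain R]

theorem eventually_eval_ne_zero {p : R[X]} (hp : p ≠ 0) : ∀ᶠ k in cofinite, p.eval k ≠ 0 :=
  eventually_cofinite.mpr <| (finite_setOfPred_isRoot hp).subset fun _ hk => not_not.mp hk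

theorem exists_forall_isUnit_eval_of_eventually_dvd (hR : ¬IsField R) {p : R[X]}
    (hp : 0 < p.natDegree) {m : R} (hm : m ≠ 0) (h : ∀ᶠ k in cofinite, p.eval k ∣ m) :
    ∃ H : R[X], 0 < H.natDegree ∧ ∀ x, IsUnit (H.eval x) := by
  have := infinite_of_not_isField hR
  have hS : ∀ᶠ k in cofinite, p.eval k ∣ m ∧ p.eval k ≠ 0 :=
    h.and (eventually_eval_ne_zero (ne_zero_of_natDegree_gt hp))
  obtain ⟨k₀, hk₀⟩ := hS.exists
  obtain ⟨e, he0, he⟩ := exists_ne_zero_forall_mul_add_of_eventually hR hS hk₀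
  set s := p.eval k₀
  set t := e * m
  have ht0 : t ≠ 0 := mul_ne_zero he0 hm
  obtain ⟨H, hH⟩ := C_eval_dvd_comp_C_mul_X_add_C p (hk₀.1.trans (dvd_mul_left m e))
  have hHeval (x : R) : p.eval (t * x + k₀) = s * H.eval x := by
    rw [← eval_C_mul, ← hH, eval_comp]
    simp [t]
  refine ⟨H, ?_, fun x => ?_⟩
  · have := congrArg natDegree hH
    rw [natDegree_C_mul hk₀.2, natDegree_comp, natDegree_linear ht0, mul_one] at this
    omega
  · obtain ⟨hwm, hw0⟩ : p.eval (t * x + k₀) ∣ m ∧ p.eval (t * x + k₀) ≠ 0 := by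
      simpa only [t, mul_assoc] using he (m * x)
    have hws : p.eval (t * x + k₀) ∣ s := by
      have hdiff : t ∣ p.eval (t * x + k₀) - s :=
        (dvd_mul_right t x).trans (by simpa using sub_dvd_eval_sub (t * x + k₀) k₀ p)
      exact dvd_sub_self_left.mp ((hwm.trans (dvd_mul_left m e)).trans hdiff)
    rw [hHeval] at hws
    exact isUnit_of_dvd_one ((mul_dvd_mul_iff_left hk₀.2).mp (by simpa using hws))

theorem natDegree_eq_zero_of_eventually_dvd
    (hP : ∀ f : R[X], 1 ≤ f.degree → f.HasNonzeroPrimeValue) {p : R[X]} {m : R} (hm : m ≠ 0)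
    (h : ∀ᶠ k in cofinite, p.eval k ∣ m) : p.natDegree = 0 := by
  by_contra hp
  have hR : ¬IsField R := (hP X degree_X.ge).not_isField
  obtain ⟨H, hH, hunit⟩ :=
    exists_forall_isUnit_eval_of_eventually_dvd hR (Nat.pos_of_ne_zero hp) hm h
  have hH1 : 1 ≤ H.degree :=
    Nat.WithBot.one_le_iff_zero_lt.mpr (natDegree_pos_iff_degree_pos.mp hH)
  obtain ⟨k, hk⟩ := (hP H hH1).exists_not_isUnit_eval
  exact hk (hunit k)

end

section FractionField

variable {R K : Type*} [CommRing R] [IsDomain R] [Field K] [Algebra R K] [IsFractionRing R K]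

theorem exists_map_eq_C_mul (P : K[X]) :
    ∃ c : R, c ≠ 0 ∧ ∃ p : R[X], p.map (algebraMap R K) = C (algebraMap R K c) * P := by
  obtain ⟨c, hc, hp⟩ := IsLocalization.integerNormalization_spec (nonZeroDivisors R) P
  refine ⟨c, nonZeroDivisors.ne_zero hc, _, hp.trans ?_⟩
  rw [← algebraMap_smul K c P, smul_eq_C_mul]

theorem exists_map_eq_C_mul_add_mul {f g : R[X]} (hfg : ∀ᶠ k in cofinite, g.eval k ∣ f.eval k)
    (A B : K[X]) :
    ∃ c : R, c ≠ 0 ∧ ∃ h : R[X],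
      h.map (algebraMap R K) = C (algebraMap R K c) *
        (f.map (algebraMap R K) * A + g.map (algebraMap R K) * B) ∧
      ∀ᶠ k in cofinite, g.eval k ∣ h.eval k := by
  obtain ⟨a, ha, pa, hpa⟩ := exists_map_eq_C_mul (R := R) A
  obtain ⟨b, hb, pb, hpb⟩ := exists_map_eq_C_mul (R := R) B
  refine ⟨a * b, mul_ne_zero ha hb, f * (C b * pa) + g * (C a * pb), ?_, ?_⟩
  · simp only [Polynomial.map_add, Polynomial.map_mul, map_C, hpa, hpb, map_mul]
    ring
  · filter_upwards [hfg] with k hk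
    simp only [eval_add, eval_mul, eval_C]
    exact (hk.mul_right _).add (dvd_mul_right _ _)

theorem eventually_dvd_of_mul_eq_C_mul {g h g₁ : R[X]} {c : R} (hh : h ≠ 0)
    (hmul : h * g₁ = C c * g) (hgh : ∀ᶠ k in cofinite, g.eval k ∣ h.eval k) :
    ∀ᶠ k in cofinite, g₁.eval k ∣ c := by
  filter_upwards [hgh, eventually_eval_ne_zero hh] with k hk hk0
  have hmulk : h.eval k * g₁.eval k = c * g.eval k := by
    simpa using congrArg (eval k) hmul
  rw [← mul_dvd_mul_iff_left hk0, hmulk, mul_comm (h.eval k)]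
  exact mul_dvd_mul_left c hk

theorem map_dvd_map_of_eventually_dvd [Infinite R]
    (hconst : ∀ (p : R[X]) (m : R), m ≠ 0 → (∀ᶠ k in cofinite, p.eval k ∣ m) → p.natDegree = 0)
    {f g : R[X]} (hfg : ∀ᶠ k in cofinite, g.eval k ∣ f.eval k) :
    g.map (algebraMap R K) ∣ f.map (algebraMap R K) := by
  classical
  have hφ := IsFractionRing.injective R K
  have hinj := map_injective _ hφ
  rcases eq_or_ne g 0 with rfl | hg
  · obtain rfl : f = 0 := by
      by_contra hf
      obtain ⟨k, hk, hk0⟩ := (hfg.and (eventually_eval_ne_zero hf)).exists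
      exact hk0 (zero_dvd_iff.mp (by simpa using hk))
    simp
  have hG : g.map (algebraMap R K) ≠ 0 := (Polynomial.map_ne_zero_iff hφ).mpr hg
  have hDF := EuclideanDomain.gcd_dvd_left (f.map (algebraMap R K)) (g.map (algebraMap R K))
  obtain ⟨G₁, hG₁⟩ :=
    EuclideanDomain.gcd_dvd_right (f.map (algebraMap R K)) (g.map (algebraMap R K))
  obtain ⟨c, hc, h, hh, hgh⟩ := exists_map_eq_C_mul_add_mul hfg
    (EuclideanDomain.gcdA (f.map (algebraMap R K)) (g.map (algebraMap R K)))
    (EuclideanDomain.gcdB (f.map (algebraMap R K)) (g.map (algebraMap R K)))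
  rw [← EuclideanDomain.gcd_eq_gcd_ab] at hh
  generalize EuclideanDomain.gcd (f.map (algebraMap R K)) (g.map (algebraMap R K)) = D
    at hDF hG₁ hh
  obtain ⟨c₁, hc₁, g₁, hg₁⟩ := exists_map_eq_C_mul (R := R) G₁
  have hh0 : h ≠ 0 := by
    rintro rfl
    have hD : D = 0 := by simpa [eq_comm (a := (0 : K[X])), hc, hφ] using hh
    exact hG (by rw [hG₁, hD, zero_mul])
  have hmul : h * g₁ = C (c * c₁) * g := hinj <| by
    simp only [Polynomial.map_mul, map_C, hh, hg₁, map_mul, hG₁]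
    ring
  have hg₁0 : g₁.natDegree = 0 :=
    hconst g₁ _ (mul_ne_zero hc hc₁) (eventually_dvd_of_mul_eq_C_mul hh0 hmul hgh)
  have hG₁0 : G₁ ≠ 0 := right_ne_zero_of_mul (hG₁ ▸ hG)
  have hG₁unit : IsUnit G₁ := by
    rw [isUnit_iff_degree_eq_zero, degree_eq_natDegree hG₁0,
      ← natDegree_C_mul ((_root_.map_ne_zero_iff _ hφ).mpr hc₁), ← hg₁,
      natDegree_map_eq_of_injective hφ, hg₁0, Nat.cast_zero]
  rw [hG₁]
  exact hG₁unit.mul_right_dvd.mpr hDF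

end FractionField

end Polynomial

theorem IsDRing.hasNonzeroPrimeValue {R : Type*} [CommRing R] [IsDomain R] (hD : IsDRing R)
    {f : R[X]} (hf : 1 ≤ f.degree) : f.HasNonzeroPrimeValue := by
  by_contra hS
  have hunit : ∀ᶠ k in cofinite, f.eval k ∣ (1 : R[X]).eval k := by
    filter_upwards [eventually_eval_ne_zero (ne_zero_of_coe_le_degree hf)] with k hk
    rw [eval_one, ← isUnit_iff_dvd_one]
    by_contra hk1
    exact hS (hasNonzeroPrimeValue_of_eval hk hk1)
  obtain ⟨q, hq⟩ := hD 1 f hunit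
  have hfu : IsUnit (f.map (algebraMap R (FractionRing R))) :=
    .of_mul_eq_one_right q (by rw [← hq, Polynomial.map_one])
  rw [← degree_map_eq_of_injective (IsFractionRing.injective R (FractionRing R)),
    degree_eq_zero_of_isUnit hfu] at hf
  exact absurd hf (by decide)

theorem isDRing_iff_prime_value (R : Type*) [CommRing R] [IsDomain R] :
    IsDRing R ↔
      ∀ f : Polynomial R, 1 ≤ f.degree →
        ∃ 𝔭 : Ideal R, 𝔭.IsPrime ∧ 𝔭 ≠ ⊥ ∧ ∃ k : R, f.eval k ∈ 𝔭 := by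
  refine ⟨fun hD f hf => hD.hasNonzeroPrimeValue hf, fun hP f g hfg => ?_⟩
  have := infinite_of_not_isField (HasNonzeroPrimeValue.not_isField (hP X degree_X.ge))
  obtain ⟨q, hq⟩ := map_dvd_map_of_eventually_dvd (K := FractionRing R)
    (fun p m hm => natDegree_eq_zero_of_eventually_dvd hP hm) hfg
  exact ⟨q, hq.trans (mul_comm _ _)⟩
end
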